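/- arXiv:2304.04872 — 4 statements merged into one kernel-verified Lean document; each statement's English description precedes it below -/
import Mathlib

section
/- Let R be a commutative ring, M an R-module, N a semimodule over the semiring fgId(R), and let w : M → N be a u_R-seminorm. Then there exists a unique additive monoid homomorphism ŵ : fgMod(M) → N such that ŵ(R·m) = w(m) for every m ∈ M (so w = ŵ ∘ u_M); explicitly, ŵ(R·m₁ + ⋯ + R·mₖ) = w(m₁) + ⋯ + w(mₖ), and this value is independent of the chosen generators. Moreover ŵ satisfies ŵ(ρ·μ) ≤ ρ·ŵ(μ) for all ρ ∈ fgId(R) and μ ∈ fgMod(M), where ≤ is the canonical order x ≤ y iff x + y = y. -/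
def FGIdeal (R : Type*) [CommRing R] : Type _ := {I : Ideal R // I.FG}

namespace FGIdeal

variable {R : Type*} [CommRing R]

instance : Zero (FGIdeal R) := ⟨⟨⊥, Submodule.fg_bot⟩⟩

instance : One (FGIdeal R) := ⟨⟨1, ⟨{1}, by simp [Ideal.one_eq_top]⟩⟩⟩

instance : Add (FGIdeal R) :=
  ⟨fun I J => ⟨I.1 + J.1, by rw [Submodule.add_eq_sup]; exact Submodule.FG.sup I.2 J.2⟩⟩

instance : Mul (FGIdeal R) := ⟨fun I J => ⟨I.1 * J.1, Submodule.FG.mul I.2 J.2⟩⟩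

instance : SMul ℕ (FGIdeal R) :=
  ⟨fun n I => ⟨n • I.1, by
    induction n with
    | zero => simp; exact Submodule.fg_bot
    | succ n ih => rw [succ_nsmul, Submodule.add_eq_sup]; exact Submodule.FG.sup ih I.2⟩⟩

instance : Pow (FGIdeal R) ℕ := ⟨fun I n => ⟨I.1 ^ n, Submodule.FG.pow I.2 n⟩⟩

instance : NatCast (FGIdeal R) :=
  ⟨fun n => ⟨(n : Ideal R), by
    induction n with
    | zero => simp; exact Submodule.fg_bot
    | succ n ih =>
        rw [Nat.cast_succ, Submodule.add_eq_sup]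
        exact Submodule.FG.sup ih ⟨{1}, by simp [Ideal.one_eq_top]⟩⟩⟩

instance : CommSemiring (FGIdeal R) :=
  Subtype.val_injective.commSemiring (fun I : FGIdeal R => I.1) rfl rfl
    (fun _ _ => rfl) (fun _ _ => rfl) (fun _ _ => rfl) (fun _ _ => rfl) (fun _ => rfl)

end FGIdeal

/-- The universal integral seminorm `u_R : R → fgId(R)`, `a ↦ R·a`. -/
def uRfg {R : Type*} [CommRing R] (a : R) : FGIdeal R := ⟨Ideal.span {a}, Submodule.fg_span_singleton a⟩

/-- The type of finitely generated `R`-submodules of `M`. -/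
def FGSubmodule (R M : Type*) [CommRing R] [AddCommGroup M] [Module R M] : Type _ :=
  {N : Submodule R M // N.FG}

namespace FGSubmodule

variable {R M : Type*} [CommRing R] [AddCommGroup M] [Module R M]

instance : Zero (FGSubmodule R M) := ⟨⟨⊥, Submodule.fg_bot⟩⟩

instance : Add (FGSubmodule R M) := ⟨fun A B => ⟨A.1 ⊔ B.1, Submodule.FG.sup A.2 B.2⟩⟩

instance : AddCommMonoid (FGSubmodule R M) where
  add_assoc A B C := Subtype.ext (sup_assoc _ _ _)
  zero_add A := Subtype.ext (bot_sup_eq _)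
  add_zero A := Subtype.ext (sup_bot_eq _)
  add_comm A B := Subtype.ext (sup_comm _ _)
  nsmul := nsmulRec

/-- The action of `fgId(R)` on `fgMod(M)`, `(I, N) ↦ I • N`. -/
instance : SMul (FGIdeal R) (FGSubmodule R M) :=
  ⟨fun ρ ν => ⟨ρ.1 • ν.1, by
    rw [Submodule.smul_eq_map₂]; exact Submodule.FG.map₂ _ ρ.2 ν.2⟩⟩

end FGSubmodule

/-- The universal `u_R`-norm `u_M : M → fgMod(M)`, `m ↦ R·m`. -/
def uMfg {R M : Type*} [CommRing R] [AddCommGroup M] [Module R M] (m : M) : FGSubmodule R M :=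
  ⟨Submodule.span R {m}, Submodule.fg_span_singleton m⟩

/-- A `u_R`-seminorm on an `R`-module `M` with values in an `fgId(R)`-semimodule `N`:
`w 0 = 0`, `w (m + m') ≤ w m + w m'`, and `w (r • m) ≤ C u_R(r) • w m` for some fixed
nonzero `C ∈ fgId(R)`. Inequalities are expressed through the canonical order
`x ≤ y` iff `x + y = y`. -/
def IsURSeminorm {R M N : Type*} [CommRing R] [AddCommGroup M] [Module R M]
    [AddCommMonoid N] [Module (FGIdeal R) N] (w : M → N) : Prop :=
  w 0 = 0 ∧
    (∀ m m' : M, w (m + m') + (w m + w m') = w m + w m') ∧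
    ∃ C : FGIdeal R, C ≠ 0 ∧
      ∀ (r : R) (m : M), w (r • m) + (C * uRfg r) • w m = (C * uRfg r) • w m


/-!
Since `1 + 1 = 1` in `fgId(R)`, every `fgId(R)`-semimodule is additively idempotent, so
`x + y = y` is a partial order in which a finite sum is the least upper bound of its terms.
If `x` lies in the span of `m₁, …, mₖ`, subadditivity together with `w (r • m) ≤ w m`
(as `C u_R(r) ≤ 1`) gives `w x ≤ ∑ w mᵢ`. Two generating families of the same submodule
therefore have mutually bounded, hence equal, sums of `w`-values, and `ŵ` is well defined
and additive. The same estimate applied to the generators `r • n` of `ρ • μ`, with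
`C u_R(r) ≤ ρ` for `r ∈ ρ`, gives `ŵ (ρ • μ) ≤ ρ • ŵ μ`.
-/

open Submodule Set

/-- `x ≼ y` (read: `y` absorbs `x`) is the canonical order `x ≤ y` of the paper. -/
local notation:50 x:51 " ≼ " y:51 => x + y = y

section Absorbed

variable {N : Type*} [AddCommMonoid N] {x y z : N}

theorem absorbed_trans (hxy : x ≼ y) (hyz : y ≼ z) : x ≼ z := by
  rw [← hyz, ← add_assoc, hxy]

theorem absorbed_antisymm (hxy : x ≼ y) (hyx : y ≼ x) : x = y := by
  rw [← hyx, add_comm, hxy]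

theorem add_absorbed (hxz : x ≼ z) (hyz : y ≼ z) : x + y ≼ z := by
  rw [add_assoc, hyz, hxz]

theorem sum_absorbed {ι : Type*} (s : Finset ι) {f : ι → N} (h : ∀ i ∈ s, f i ≼ z) :
    ∑ i ∈ s, f i ≼ z :=
  Finset.sum_induction f (· ≼ z) (fun _ _ => add_absorbed) (zero_add z) h

theorem smul_absorbed_smul {S : Type*} [DistribSMul S N] (a : S) (h : x ≼ y) :
    a • x ≼ a • y := by
  rw [← smul_add, h]

end Absorbed

namespace FGIdeal

theorem one_add_one {R : Type*} [CommRing R] : (1 : FGIdeal R) + 1 = 1 :=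
  Subtype.ext (sup_idem _)

theorem one_val {R : Type*} [CommRing R] : (1 : FGIdeal R).1 = ⊤ :=
  Ideal.one_eq_top

theorem absorbed_refl (R : Type*) {N : Type*} [CommRing R] [AddCommMonoid N]
    [Module (FGIdeal R) N] (x : N) : x ≼ x := by
  simpa only [add_smul, one_smul] using congrArg (· • x) (one_add_one (R := R))

theorem single_absorbed_sum (R : Type*) {N : Type*} [CommRing R] [AddCommMonoid N]
    [Module (FGIdeal R) N] {ι : Type*} [DecidableEq ι] {s : Finset ι} {i : ι} (hi : i ∈ s)
    (f : ι → N) : f i ≼ ∑ j ∈ s, f j := by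
  rw [← Finset.add_sum_erase s f hi, ← add_assoc, absorbed_refl R]

variable {R N : Type*} [CommRing R] [AddCommMonoid N] [Module (FGIdeal R) N]

theorem smul_absorbed_smul_of_le {I J : FGIdeal R} (h : I.1 ≤ J.1) (x : N) :
    I • x ≼ J • x := by
  rw [← add_smul, show I + J = J from Subtype.ext (sup_eq_right.2 h)]

end FGIdeal

namespace FGSubmodule

variable {R M : Type*} [CommRing R] [AddCommGroup M] [Module R M]

noncomputable def gens (μ : FGSubmodule R M) : μ.2.choose → M := (↑)

theorem span_range_gens (μ : FGSubmodule R M) : span R (range μ.gens) = μ.1 := by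
  rw [gens, Subtype.range_coe]
  exact μ.2.choose_spec

theorem gens_mem (μ : FGSubmodule R M) (i : μ.2.choose) : μ.gens i ∈ μ.1 :=
  μ.span_range_gens ▸ subset_span (mem_range_self i)

def valAddMonoidHom : FGSubmodule R M →+ Submodule R M where
  toFun := Subtype.val
  map_zero' := rfl
  map_add' _ _ := rfl

theorem eq_sum_uMfg {ι : Type*} [Fintype ι] {m : ι → M} {μ : FGSubmodule R M}
    (h : μ.1 = span R (range m)) : μ = ∑ i, uMfg (m i) := by
  refine Subtype.ext ?_
  change μ.1 = valAddMonoidHom (∑ i, uMfg (m i))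
  rw [map_sum, h, span_range_eq_iSup, ← Finset.sup_univ_eq_iSup]
  rfl

theorem map_eq_sum_of_eq_span {N : Type*} [AddCommMonoid N] (f : FGSubmodule R M →+ N)
    {ι : Type*} [Fintype ι] {m : ι → M} {μ : FGSubmodule R M} (h : μ.1 = span R (range m)) :
    f μ = ∑ i, f (uMfg (m i)) := by
  rw [eq_sum_uMfg h, map_sum]

theorem addMonoidHom_ext {N : Type*} [AddCommMonoid N] {f g : FGSubmodule R M →+ N}
    (h : ∀ m, f (uMfg m) = g (uMfg m)) : f = g := by
  ext μ
  simp only [map_eq_sum_of_eq_span _ μ.span_range_gens.symm, h]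

end FGSubmodule

namespace IsURSeminorm

variable {R M N : Type*} [CommRing R] [AddCommGroup M] [Module R M]
  [AddCommMonoid N] [Module (FGIdeal R) N] {w : M → N}

theorem map_smul_absorbed (hw : IsURSeminorm (R := R) w) {ρ : FGIdeal R} {r : R} (hr : r ∈ ρ.1)
    {m : M} {x : N} (hm : w m ≼ x) : w (r • m) ≼ ρ • x := by
  obtain ⟨C, -, hC⟩ := hw.2.2
  have hle : (C * uRfg r).1 ≤ ρ.1 :=
    Ideal.mul_le_right.trans ((Ideal.span_singleton_le_iff_mem _).2 hr)
  exact absorbed_trans (hC r m) <|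
    absorbed_trans (smul_absorbed_smul _ hm) (FGIdeal.smul_absorbed_smul_of_le hle x)

theorem map_absorbed_sum_of_mem_span (hw : IsURSeminorm (R := R) w) {ι : Type*} [Fintype ι]
    {m : ι → M} {x : M} (hx : x ∈ span R (range m)) : w x ≼ ∑ i, w (m i) := by
  classical
  induction hx using span_induction with
  | mem _ h =>
    obtain ⟨i, rfl⟩ := h
    exact FGIdeal.single_absorbed_sum R (Finset.mem_univ i) (w ∘ m)
  | zero => rw [hw.1, zero_add]
  | add _ _ _ _ hx hy => exact absorbed_trans (hw.2.1 _ _) (add_absorbed hx hy)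
  | smul r _ _ hx =>
    simpa only [one_smul] using
      hw.map_smul_absorbed (ρ := 1) (FGIdeal.one_val (R := R) ▸ mem_top) hx

theorem map_absorbed_smul_sum_of_mem_smul_span (hw : IsURSeminorm (R := R) w) {ι : Type*}
    [Fintype ι] {m : ι → M} {ρ : FGIdeal R} {x : M} (hx : x ∈ ρ.1 • span R (range m)) :
    w x ≼ ρ • ∑ i, w (m i) := by
  refine smul_induction_on hx (fun r hr n hn => ?_) fun _ _ hx hy => ?_
  · exact hw.map_smul_absorbed hr (hw.map_absorbed_sum_of_mem_span hn)
  · exact absorbed_trans (hw.2.1 _ _) (add_absorbed hx hy)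

theorem sum_eq_of_span_eq (hw : IsURSeminorm (R := R) w) {ι κ : Type*} [Fintype ι] [Fintype κ]
    {m : ι → M} {m' : κ → M} (h : span R (range m) = span R (range m')) :
    ∑ i, w (m i) = ∑ j, w (m' j) := by
  refine absorbed_antisymm (sum_absorbed _ fun i _ => ?_) (sum_absorbed _ fun j _ => ?_)
  · exact hw.map_absorbed_sum_of_mem_span (h ▸ subset_span (mem_range_self i))
  · exact hw.map_absorbed_sum_of_mem_span (h.symm ▸ subset_span (mem_range_self j))

theorem sum_gens_eq (hw : IsURSeminorm (R := R) w) {ι : Type*} [Fintype ι] {m : ι → M}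
    {μ : FGSubmodule R M} (h : μ.1 = span R (range m)) :
    ∑ i, w (μ.gens i) = ∑ i, w (m i) :=
  hw.sum_eq_of_span_eq (μ.span_range_gens.trans h)

noncomputable def inducedHom (hw : IsURSeminorm (R := R) w) : FGSubmodule R M →+ N where
  toFun μ := ∑ i, w (μ.gens i)
  map_zero' := by
    rw [hw.sum_gens_eq (m := (Empty.elim : Empty → M)) (by rw [range_eq_empty, span_empty]; rfl)]
    exact Finset.sum_empty
  map_add' μ ν := by
    rw [hw.sum_gens_eq (m := Sum.elim μ.gens ν.gens), Fintype.sum_sum_type]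
    · rfl
    · rw [Set.Sum.elim_range, span_union, μ.span_range_gens, ν.span_range_gens]
      rfl

theorem inducedHom_uMfg (hw : IsURSeminorm (R := R) w) (m : M) : hw.inducedHom (uMfg m) = w m := by
  change ∑ i, w ((uMfg m).gens i) = w m
  rw [hw.sum_gens_eq (m := fun _ : Unit => m) (by rw [range_const]; rfl)]
  simp

theorem map_smul_absorbed_smul_map (hw : IsURSeminorm (R := R) w) {f : FGSubmodule R M →+ N}
    (hf : ∀ m, f (uMfg m) = w m) (ρ : FGIdeal R) (μ : FGSubmodule R M) :
    f (ρ • μ) ≼ ρ • f μ := by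
  rw [FGSubmodule.map_eq_sum_of_eq_span f (ρ • μ).span_range_gens.symm,
    FGSubmodule.map_eq_sum_of_eq_span f μ.span_range_gens.symm]
  simp only [hf]
  refine sum_absorbed _ fun j _ => hw.map_absorbed_smul_sum_of_mem_smul_span ?_
  rw [μ.span_range_gens]
  exact (ρ • μ).gens_mem j

end IsURSeminorm

/-- Any `u_R`-seminorm `w : M → N` factors through a unique additive
monoid homomorphism `ŵ : fgMod(M) → N` with `ŵ (R·m) = w m`; explicitly
`ŵ (R·m₁ + ⋯ + R·mₖ) = w m₁ + ⋯ + w mₖ` (independently of the chosen generators), and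
`ŵ (ρ • μ) ≤ ρ • ŵ μ` for all `ρ ∈ fgId(R)` and `μ ∈ fgMod(M)`. -/
theorem exists_unique_induced_hom_of_URSeminorm
    (R M N : Type*) [CommRing R] [AddCommGroup M] [Module R M]
    [AddCommMonoid N] [Module (FGIdeal R) N]
    (w : M → N) (hw : IsURSeminorm (R := R) w) :
    (∃! what : FGSubmodule R M →+ N, ∀ m : M, what (uMfg m) = w m) ∧
    (∀ what : FGSubmodule R M →+ N, (∀ m : M, what (uMfg m) = w m) →
      (∀ (k : ℕ) (m : Fin k → M) (μ : FGSubmodule R M),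
        μ.1 = Submodule.span R (Set.range m) → what μ = ∑ i, w (m i)) ∧
      (∀ (ρ : FGIdeal R) (μ : FGSubmodule R M),
        what (ρ • μ) + ρ • what μ = ρ • what μ)) := by
  refine ⟨⟨hw.inducedHom, hw.inducedHom_uMfg, fun f hf => ?_⟩, fun f hf => ⟨?_, ?_⟩⟩
  · exact FGSubmodule.addMonoidHom_ext fun m => by rw [hf, hw.inducedHom_uMfg]
  · intro k m μ hμ
    simp only [FGSubmodule.map_eq_sum_of_eq_span f hμ, hf]
  · exact hw.map_smul_absorbed_smul_map hf
end

section
/- Let S be a commutative semiring and let I be a subtractive ideal of S. Let c(I) be the semiring congruence on S generated by {(a, 0) : a ∈ I} and let π : S → S/c(I) be the quotient morphism. Then the map J ↦ π(J) is an inclusion-preserving bijection from the set of subtractive ideals of S containing I onto the set of subtractive ideals of S/c(I), with inverse K ↦ π⁻¹(K), and this bijection preserves prime ideals in both directions. -/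
section SemiringIdeals

variable {S : Type*} [CommSemiring S]

/-- A subset of a commutative semiring which is an ideal: it contains `0` and is closed
under addition and under multiplication by arbitrary elements. -/
def IsIdealSet (I : Set S) : Prop :=
  (0 : S) ∈ I ∧ (∀ a ∈ I, ∀ b ∈ I, a + b ∈ I) ∧ ∀ (c : S), ∀ a ∈ I, c * a ∈ I

/-- A subset `I` is subtractive if `a + b ∈ I` and `a ∈ I` imply `b ∈ I`. -/
def IsSubtractiveSet (I : Set S) : Prop :=
  ∀ a b : S, a + b ∈ I → a ∈ I → b ∈ I

/-- A `k`-ideal (subtractive ideal) of a commutative semiring. -/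
def IsKIdeal (I : Set S) : Prop := IsIdealSet I ∧ IsSubtractiveSet I

/-- An ideal of a commutative semiring is prime when its complement is multiplicatively
closed: `1 ∉ I` and `a * b ∈ I` implies `a ∈ I` or `b ∈ I`. -/
def IsPrimeSet (I : Set S) : Prop :=
  (1 : S) ∉ I ∧ ∀ a b : S, a * b ∈ I → a ∈ I ∨ b ∈ I

/-- The semiring congruence `c(I)` generated by `{(a, 0) : a ∈ I}`. -/
def congOf (I : Set S) : RingCon S := ringConGen fun a b => a ∈ I ∧ b = 0

end SemiringIdeals

/-!
The quotient map `π` is a surjective semiring morphism, and along a surjective morphism taking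
preimages identifies the `k`-ideals (and the prime sets) of the target with those of the source.
So everything reduces to `π⁻¹(π(J)) = J` for a `k`-ideal `J ⊇ I`. For this, `c(I)` lies below the
Bourne congruence of `J`, which relates `x` and `y` when `x + j = y + j'` for some `j, j' ∈ J`;
if `y ∈ J` then `x + j ∈ J`, hence `x ∈ J` by subtractivity.
-/

section Surjective

variable {S T : Type*} [CommSemiring S] [CommSemiring T] {f : S →+* T}

theorem isIdealSet_preimage_iff (hf : Function.Surjective f) {K : Set T} :
    IsIdealSet (f ⁻¹' K) ↔ IsIdealSet K := by
  simp only [IsIdealSet, Set.mem_preimage, map_zero, hf.forall, ← map_add, ← map_mul]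

theorem isSubtractiveSet_preimage_iff (hf : Function.Surjective f) {K : Set T} :
    IsSubtractiveSet (f ⁻¹' K) ↔ IsSubtractiveSet K := by
  simp only [IsSubtractiveSet, Set.mem_preimage, hf.forall, ← map_add]

theorem isKIdeal_preimage_iff (hf : Function.Surjective f) {K : Set T} :
    IsKIdeal (f ⁻¹' K) ↔ IsKIdeal K :=
  and_congr (isIdealSet_preimage_iff hf) (isSubtractiveSet_preimage_iff hf)

theorem isPrimeSet_preimage_iff (hf : Function.Surjective f) {K : Set T} :
    IsPrimeSet (f ⁻¹' K) ↔ IsPrimeSet K := by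
  simp only [IsPrimeSet, Set.mem_preimage, map_one, hf.forall, ← map_mul]

end Surjective

section Congruence

variable {S : Type*} [CommSemiring S]

def bourneCon (J : Set S) (hJ : IsIdealSet J) : RingCon S where
  r x y := ∃ i ∈ J, ∃ j ∈ J, x + i = y + j
  iseqv := by
    refine ⟨fun x => ⟨0, hJ.1, 0, hJ.1, rfl⟩, ?_, ?_⟩
    · rintro x y ⟨i, hi, j, hj, h⟩
      exact ⟨j, hj, i, hi, h.symm⟩
    · rintro x y z ⟨i, hi, j, hj, h⟩ ⟨i', hi', j', hj', h'⟩
      refine ⟨i + i', hJ.2.1 _ hi _ hi', j' + j, hJ.2.1 _ hj' _ hj, ?_⟩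
      calc x + (i + i') = (x + i) + i' := by ring
        _ = (y + i') + j := by rw [h]; ring
        _ = (z + j') + j := by rw [h']
        _ = z + (j' + j) := by ring
  add' := by
    rintro a b c d ⟨i, hi, j, hj, h⟩ ⟨i', hi', j', hj', h'⟩
    refine ⟨i + i', hJ.2.1 _ hi _ hi', j + j', hJ.2.1 _ hj _ hj', ?_⟩
    calc a + c + (i + i') = (a + i) + (c + i') := by ring
      _ = (b + j) + (d + j') := by rw [h, h']
      _ = b + d + (j + j') := by ring
  mul' := by
    rintro a b c d ⟨i, hi, j, hj, h⟩ ⟨i', hi', j', hj', h'⟩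
    have mem {x y u v : S} (hu : u ∈ J) (hv : v ∈ J) : x * v + u * y + u * v ∈ J :=
      hJ.2.1 _ (hJ.2.1 _ (hJ.2.2 _ _ hv) _ (mul_comm y u ▸ hJ.2.2 _ _ hu)) _ (hJ.2.2 _ _ hv)
    refine ⟨a * i' + i * c + i * i', mem hi hi', b * j' + j * d + j * j', mem hj hj', ?_⟩
    calc a * c + (a * i' + i * c + i * i') = (a + i) * (c + i') := by ring
      _ = (b + j) * (d + j') := by rw [h, h']
      _ = b * d + (b * j' + j * d + j * j') := by ring

theorem mk'_congOf_eq_zero {I : Set S} {a : S} (ha : a ∈ I) : (congOf I).mk' a = 0 :=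
  (congOf I).eq.2 (RingConGen.Rel.of _ _ ⟨ha, rfl⟩)

theorem congOf_le_bourneCon {I J : Set S} (hJ : IsIdealSet J) (hIJ : I ⊆ J) :
    congOf I ≤ bourneCon J hJ :=
  RingCon.ringConGen_le.2 fun a _ ⟨ha, hb⟩ =>
    ⟨0, hJ.1, a, hIJ ha, by rw [hb, add_zero, zero_add]⟩

theorem IsKIdeal.mem_of_bourneCon {J : Set S} (hJ : IsKIdeal J) {x y : S}
    (hxy : bourneCon J hJ.1 x y) (hy : y ∈ J) : x ∈ J := by
  obtain ⟨i, hi, j, hj, h⟩ := hxy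
  exact hJ.2 i x (by rw [add_comm, h]; exact hJ.1.2.1 _ hy _ hj) hi

theorem IsKIdeal.preimage_image_mk'_congOf {I J : Set S} (hJ : IsKIdeal J) (hIJ : I ⊆ J) :
    (congOf I).mk' ⁻¹' ((congOf I).mk' '' J) = J := by
  refine (Set.subset_preimage_image _ _).antisymm' ?_
  rintro x ⟨y, hy, hyx⟩
  exact hJ.mem_of_bourneCon (congOf_le_bourneCon hJ.1 hIJ ((congOf I).eq.1 hyx.symm)) hy

end Congruence

theorem quotient_correspondence_of_kIdeals_general
    (S : Type*) [CommSemiring S] (I : Set S) :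
    (∀ J : Set S, IsKIdeal J → I ⊆ J → IsKIdeal ((congOf I).mk' '' J)) ∧
    (∀ K : Set (congOf I).Quotient, IsKIdeal K →
      IsKIdeal ((congOf I).mk' ⁻¹' K) ∧ I ⊆ (congOf I).mk' ⁻¹' K) ∧
    (∀ J : Set S, IsKIdeal J → I ⊆ J → (congOf I).mk' ⁻¹' ((congOf I).mk' '' J) = J) ∧
    (∀ K : Set (congOf I).Quotient, IsKIdeal K →
      (congOf I).mk' '' ((congOf I).mk' ⁻¹' K) = K) ∧
    (∀ J J' : Set S, IsKIdeal J → IsKIdeal J' → I ⊆ J → I ⊆ J' →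
      (J ⊆ J' ↔ (congOf I).mk' '' J ⊆ (congOf I).mk' '' J')) ∧
    (∀ J : Set S, IsKIdeal J → I ⊆ J →
      (IsPrimeSet J ↔ IsPrimeSet ((congOf I).mk' '' J))) := by
  have hπ := (congOf I).mk'_surjective
  refine ⟨fun J hJ hIJ => ?_, fun K hK => ⟨(isKIdeal_preimage_iff hπ).2 hK, fun a ha => ?_⟩,
    fun J hJ hIJ => hJ.preimage_image_mk'_congOf hIJ, fun K _ => Set.image_preimage_eq K hπ,
    fun J J' hJ hJ' hIJ hIJ' => ?_, fun J hJ hIJ => ?_⟩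
  · rwa [← isKIdeal_preimage_iff hπ, hJ.preimage_image_mk'_congOf hIJ]
  · rw [Set.mem_preimage, mk'_congOf_eq_zero ha]
    exact hK.1.1
  · refine ⟨Set.image_mono, fun h => ?_⟩
    rw [← hJ.preimage_image_mk'_congOf hIJ, ← hJ'.preimage_image_mk'_congOf hIJ']
    exact Set.preimage_mono h
  · rw [← isPrimeSet_preimage_iff hπ, hJ.preimage_image_mk'_congOf hIJ]

/-- Let `I` be a subtractive ideal of a commutative semiring `S`, let
`c(I)` be the congruence generated by `{(a, 0) : a ∈ I}` and `π : S → S/c(I)` the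
quotient morphism. Then `J ↦ π(J)` is an inclusion-preserving bijection from the
subtractive ideals of `S` containing `I` onto the subtractive ideals of `S/c(I)`, with
inverse `K ↦ π⁻¹(K)`, and it preserves prime ideals in both directions. -/
theorem quotient_correspondence_of_kIdeals
    (S : Type*) [CommSemiring S] (I : Set S) (hI : IsKIdeal I) :
    (∀ J : Set S, IsKIdeal J → I ⊆ J → IsKIdeal ((congOf I).mk' '' J)) ∧
    (∀ K : Set (congOf I).Quotient, IsKIdeal K →
      IsKIdeal ((congOf I).mk' ⁻¹' K) ∧ I ⊆ (congOf I).mk' ⁻¹' K) ∧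
    (∀ J : Set S, IsKIdeal J → I ⊆ J → (congOf I).mk' ⁻¹' ((congOf I).mk' '' J) = J) ∧
    (∀ K : Set (congOf I).Quotient, IsKIdeal K →
      (congOf I).mk' '' ((congOf I).mk' ⁻¹' K) = K) ∧
    (∀ J J' : Set S, IsKIdeal J → IsKIdeal J' → I ⊆ J → I ⊆ J' →
      (J ⊆ J' ↔ (congOf I).mk' '' J ⊆ (congOf I).mk' '' J')) ∧
    (∀ J : Set S, IsKIdeal J → I ⊆ J →
      (IsPrimeSet J ↔ IsPrimeSet ((congOf I).mk' '' J))) :=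
  quotient_correspondence_of_kIdeals_general S I
end

section
/- Let S be an additively idempotent commutative semiring and let X ⊆ S. Then the subtractive closure of the ideal generated by X is ⟨X⟩_k = {c ∈ S : a + c = a for some a ∈ ⟨X⟩}, where ⟨X⟩ is the ideal of S generated by X. -/
section SemiringIdeals

variable {S : Type*} [CommSemiring S]

/-- The smallest subtractive ideal containing a subset `X` (the subtractive closure
`⟨X⟩_k`). -/
def kClosure (X : Set S) : Set S := ⋂₀ {J : Set S | IsKIdeal J ∧ X ⊆ J}

/-- The smallest ideal `⟨X⟩` containing a subset `X`. -/
def idealGen (X : Set S) : Set S := ⋂₀ {J : Set S | IsIdealSet J ∧ X ⊆ J}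

end SemiringIdeals

section SubtractiveClosure

variable {S : Type*} [CommSemiring S]

theorem isIdealSet_idealGen (X : Set S) : IsIdealSet (idealGen X) :=
  ⟨fun _ hJ => hJ.1.1,
    fun _ ha _ hb J hJ => hJ.1.2.1 _ (ha J hJ) _ (hb J hJ),
    fun c _ ha J hJ => hJ.1.2.2 c _ (ha J hJ)⟩

theorem subset_idealGen (X : Set S) : X ⊆ idealGen X :=
  fun _ hx _ hJ => hJ.2 hx

theorem idealGen_subset {X J : Set S} (hJ : IsIdealSet J) (hXJ : X ⊆ J) : idealGen X ⊆ J :=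
  Set.sInter_subset_of_mem ⟨hJ, hXJ⟩

theorem kClosure_subset {X J : Set S} (hJ : IsKIdeal J) (hXJ : X ⊆ J) : kClosure X ⊆ J :=
  Set.sInter_subset_of_mem ⟨hJ, hXJ⟩

/-- In an additively idempotent semiring `a + c = a` means `c ≤ a` for the natural order,
so this is the down-set of `I`. -/
def absorbedSet (I : Set S) : Set S := {c | ∃ a ∈ I, a + c = a}

theorem isIdealSet_absorbedSet {I : Set S} (hI : IsIdealSet I) : IsIdealSet (absorbedSet I) := by
  obtain ⟨hI0, hIadd, hImul⟩ := hI
  refine ⟨⟨0, hI0, add_zero 0⟩, ?_, ?_⟩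
  · rintro c ⟨a, ha, hac⟩ d ⟨b, hb, hbd⟩
    refine ⟨a + b, hIadd a ha b hb, ?_⟩
    rw [add_add_add_comm, hac, hbd]
  · rintro s c ⟨a, ha, hac⟩
    exact ⟨s * a, hImul s a ha, by rw [← mul_add, hac]⟩

theorem isSubtractiveSet_absorbedSet (hS : ∀ a : S, a + a = a) (I : Set S) :
    IsSubtractiveSet (absorbedSet I) := by
  rintro c d ⟨a, ha, hacd⟩ -
  refine ⟨a, ha, ?_⟩
  calc a + d = a + (c + d) + d := by rw [hacd]
    _ = a + (c + (d + d)) := by ring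
    _ = a := by rw [hS d, hacd]

theorem subset_absorbedSet (hS : ∀ a : S, a + a = a) (I : Set S) : I ⊆ absorbedSet I :=
  fun a ha => ⟨a, ha, hS a⟩

theorem absorbedSet_subset {I J : Set S} (hJ : IsSubtractiveSet J) (hIJ : I ⊆ J) :
    absorbedSet I ⊆ J := by
  rintro c ⟨a, ha, hac⟩
  exact hJ a c (by rw [hac]; exact hIJ ha) (hIJ ha)

end SubtractiveClosure

/-- In an additively idempotent commutative semiring `S`, the
subtractive closure of the ideal generated by a subset `X` is
`⟨X⟩_k = {c ∈ S : a + c = a for some a ∈ ⟨X⟩}`. -/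
theorem kClosure_eq_of_idempotent (S : Type*) [CommSemiring S]
    (hS : ∀ a : S, a + a = a) (X : Set S) :
    kClosure X = {c : S | ∃ a ∈ idealGen X, a + c = a} := by
  change kClosure X = absorbedSet (idealGen X)
  apply Set.Subset.antisymm
  · have hK : IsKIdeal (absorbedSet (idealGen X)) :=
      ⟨isIdealSet_absorbedSet (isIdealSet_idealGen X), isSubtractiveSet_absorbedSet hS _⟩
    exact kClosure_subset hK ((subset_idealGen X).trans (subset_absorbedSet hS _))
  · refine Set.subset_sInter fun K ⟨hK, hXK⟩ => ?_
    exact absorbedSet_subset hK.2 (idealGen_subset hK.1 hXK)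
end

section
/- Let X be a topological space, let x ∈ X, and let F be a presheaf of commutative rings on X. Let fgId(F) be the presheaf of additively idempotent semirings on X given on an open set U by the semiring fgId(F(U)) of finitely generated ideals of F(U), with restriction maps sending an ideal I to the ideal of F(V) generated by the image of I under the restriction F(U) → F(V). Then the canonical map φ_x from the stalk of fgId(F) at x to fgId(F_x), which sends the class of a pair (U, ⟨s₁, …, sₘ⟩) with x ∈ U and s₁, …, sₘ ∈ F(U) to the ideal of the stalk F_x generated by the germs s₁,ₓ, …, s_{m,x}, is a bijection. -/
open CategoryTheory TopologicalSpace Opposite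

/-- Representatives of germs of the presheaf `fgId(F)` at `x`: pairs of an open
neighbourhood `U` of `x` together with a finitely generated ideal of `F(U)`. -/
def FGGermRep {X : TopCat} (F : TopCat.Presheaf CommRingCat X) (x : X) : Type _ :=
  Σ U : {U : Opens X // x ∈ U}, FGIdeal ↥(F.obj (op U.1))

/-- Two representatives define the same germ when their images under the restriction
maps of the presheaf `fgId(F)` (which send an ideal `I` to the ideal generated by the
image of `I` under the restriction map of `F`) agree on a smaller open neighbourhood of
`x`. The stalk of `fgId(F)` at `x` is the corresponding filtered colimit of the sets
`fgId(F(U))`, i.e. `Quot (fgGermRel F x)`. -/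
def fgGermRel {X : TopCat} (F : TopCat.Presheaf CommRingCat X) (x : X) :
    FGGermRep F x → FGGermRep F x → Prop := fun a b =>
  ∃ (W : Opens X) (_ : x ∈ W) (h1 : W ≤ a.1.1) (h2 : W ≤ b.1.1),
    Ideal.map (F.map (homOfLE h1).op).hom a.2.1 = Ideal.map (F.map (homOfLE h2).op).hom b.2.1

/-!
Every element of the ideal of `Fₓ` generated by the germs of an ideal `J ⊆ F(V)` is already
the germ of an element of the restriction of `J` to some smaller neighbourhood, because the
neighbourhoods of `x` are directed and every element of `Fₓ` is a germ. Applied to the finitely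
many generators of `I ⊆ F(U)`, this shows that an inclusion of the generated ideals of `Fₓ` holds
after restricting to a small enough neighbourhood, which gives injectivity. Surjectivity holds
because finitely many germs are germs of sections over one common neighbourhood.
-/

namespace TopCat.Presheaf

variable {X : TopCat} (F : Presheaf CommRingCat X)

lemma ideal_map_map_res {W V U : Opens X} (h₁ : W ≤ V) (h₂ : V ≤ U) (I : Ideal (F.obj (op U))) :
    (I.map (F.map (homOfLE h₂).op).hom).map (F.map (homOfLE h₁).op).hom =
      I.map (F.map (homOfLE (h₁.trans h₂)).op).hom := by
  rw [Ideal.map_map, ← CommRingCat.hom_comp, ← F.map_comp]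
  rfl

lemma res_mem_ideal_map_res {W V U : Opens X} (h₁ : W ≤ V) (h₂ : V ≤ U)
    {J : Ideal (F.obj (op U))} {a : F.obj (op V)} (ha : a ∈ J.map (F.map (homOfLE h₂).op).hom) :
    F.map (homOfLE h₁).op a ∈ J.map (F.map (homOfLE (h₁.trans h₂)).op).hom := by
  rw [← ideal_map_map_res F h₁ h₂]
  exact Ideal.mem_map_of_mem _ ha

lemma ideal_map_res_le_of_le {W' W U V : Opens X} (h : W' ≤ W) {h₁ : W ≤ U} {h₂ : W ≤ V}
    {I : Ideal (F.obj (op U))} {J : Ideal (F.obj (op V))}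
    (hIJ : I.map (F.map (homOfLE h₁).op).hom ≤ J.map (F.map (homOfLE h₂).op).hom) :
    I.map (F.map (homOfLE (h.trans h₁)).op).hom ≤ J.map (F.map (homOfLE (h.trans h₂)).op).hom := by
  rw [← ideal_map_map_res F h h₁, ← ideal_map_map_res F h h₂]
  exact Ideal.map_mono hIJ

lemma ideal_map_germ_map_res {V U : Opens X} (h : V ≤ U) {x : X} (hV : x ∈ V) (hU : x ∈ U)
    (I : Ideal (F.obj (op U))) :
    (I.map (F.map (homOfLE h).op).hom).map (F.germ V x hV).hom = I.map (F.germ U x hU).hom := by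
  rw [Ideal.map_map, ← CommRingCat.hom_comp, F.germ_res]

lemma exists_germ_eq_of_finite {ι : Type*} [Finite ι] {x : X} (g : ι → F.stalk x) :
    ∃ (U : Opens X) (hU : x ∈ U) (s : ι → F.obj (op U)), ∀ i, F.germ U x hU (s i) = g i := by
  choose U hU s hs using fun i => F.exists_germ_eq (g i)
  have := Fintype.ofFinite ι
  have hx : x ∈ Finset.univ.inf U := by
    simpa [← SetLike.mem_coe, Opens.coe_finset_inf] using hU
  have hle i : Finset.univ.inf U ≤ U i := Finset.inf_le (Finset.mem_univ i)
  exact ⟨_, hx, fun i => F.map (homOfLE (hle i)).op (s i), fun i => by rw [F.germ_res_apply, hs]⟩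

lemma exists_germ_eq_of_mem_ideal_map_germ {x : X} {V : Opens X} (hV : x ∈ V)
    (J : Ideal (F.obj (op V))) {y : F.stalk x} (hy : y ∈ J.map (F.germ V x hV).hom) :
    ∃ (W : Opens X) (hW : x ∈ W) (h : W ≤ V),
      ∃ t ∈ J.map (F.map (homOfLE h).op).hom, F.germ W x hW t = y := by
  induction hy using Submodule.span_induction with
  | mem _ hy =>
    obtain ⟨t, ht, rfl⟩ := hy
    exact ⟨V, hV, le_rfl, _, Ideal.mem_map_of_mem _ ht, F.germ_res_apply _ x hV t⟩
  | zero => exact ⟨V, hV, le_rfl, 0, zero_mem _, map_zero _⟩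
  | add _ _ _ _ ih₁ ih₂ =>
    obtain ⟨W₁, hW₁, h₁, t₁, ht₁, rfl⟩ := ih₁
    obtain ⟨W₂, hW₂, h₂, t₂, ht₂, rfl⟩ := ih₂
    refine ⟨W₁ ⊓ W₂, Opens.mem_inf.mpr ⟨hW₁, hW₂⟩, inf_le_left.trans h₁,
      F.map (homOfLE inf_le_left).op t₁ + F.map (homOfLE inf_le_right).op t₂,
      add_mem (res_mem_ideal_map_res F _ h₁ ht₁) (res_mem_ideal_map_res F _ h₂ ht₂), ?_⟩
    rw [map_add, F.germ_res_apply, F.germ_res_apply]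
  | smul r _ _ ih =>
    obtain ⟨W, hW, h, t, ht, rfl⟩ := ih
    obtain ⟨W', hW'W, hW', r', rfl⟩ := F.exists_le_germ_eq r hW
    exact ⟨W', hW', hW'W.trans h, r' * F.map (homOfLE hW'W).op t,
      Ideal.mul_mem_left _ _ (res_mem_ideal_map_res F hW'W h ht),
      by rw [map_mul, F.germ_res_apply]; rfl⟩

lemma exists_res_mem_of_germ_mem_ideal_map_germ {x : X} {U V : Opens X} (hU : x ∈ U)
    (hV : x ∈ V) (J : Ideal (F.obj (op V))) {a : F.obj (op U)}
    (ha : F.germ U x hU a ∈ J.map (F.germ V x hV).hom) :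
    ∃ (W : Opens X) (_ : x ∈ W) (h₁ : W ≤ U) (h₂ : W ≤ V),
      F.map (homOfLE h₁).op a ∈ J.map (F.map (homOfLE h₂).op).hom := by
  obtain ⟨W, hW, h, t, ht, hta⟩ := F.exists_germ_eq_of_mem_ideal_map_germ hV J ha
  obtain ⟨W', hW', iW, iU, e⟩ := F.germ_eq x hW hU t a hta
  refine ⟨W', hW', iU.le, iW.le.trans h, ?_⟩
  rw [show homOfLE iU.le = iU from rfl, ← e]
  exact res_mem_ideal_map_res F iW.le h ht

lemma exists_ideal_map_res_le_of_ideal_map_germ_le {x : X} {U V : Opens X} (hU : x ∈ U)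
    (hV : x ∈ V) {I : Ideal (F.obj (op U))} (hI : I.FG) (J : Ideal (F.obj (op V)))
    (hIJ : I.map (F.germ U x hU).hom ≤ J.map (F.germ V x hV).hom) :
    ∃ (W : Opens X) (_ : x ∈ W) (h₁ : W ≤ U) (h₂ : W ≤ V),
      I.map (F.map (homOfLE h₁).op).hom ≤ J.map (F.map (homOfLE h₂).op).hom := by
  induction I, hI using Submodule.fg_induction with
  | singleton a =>
    rw [← Ideal.span, Ideal.map_span, Set.image_singleton, Ideal.span_singleton_le_iff_mem] at hIJ
    obtain ⟨W, hW, h₁, h₂, ha⟩ := F.exists_res_mem_of_germ_mem_ideal_map_germ hU hV J hIJ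
    refine ⟨W, hW, h₁, h₂, ?_⟩
    rwa [← Ideal.span, Ideal.map_span, Set.image_singleton, Ideal.span_singleton_le_iff_mem]
  | sup I₁ I₂ _ _ ih₁ ih₂ =>
    rw [Ideal.map_sup, sup_le_iff] at hIJ
    obtain ⟨W₁, hW₁, h₁, h₁', hle₁⟩ := ih₁ hIJ.1
    obtain ⟨W₂, hW₂, h₂, h₂', hle₂⟩ := ih₂ hIJ.2
    refine ⟨W₁ ⊓ W₂, Opens.mem_inf.mpr ⟨hW₁, hW₂⟩, inf_le_left.trans h₁, inf_le_left.trans h₁', ?_⟩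
    rw [Ideal.map_sup, sup_le_iff]
    exact ⟨ideal_map_res_le_of_le F inf_le_left hle₁, ideal_map_res_le_of_le F inf_le_right hle₂⟩

end TopCat.Presheaf

section

variable {X : TopCat} (F : TopCat.Presheaf CommRingCat X) (x : X)

noncomputable def fgIdealStalkMap : Quot (fgGermRel F x) → FGIdeal (F.stalk x) :=
  Quot.lift (fun a => ⟨a.2.1.map (F.germ a.1.1 x a.1.2).hom, a.2.2.map _⟩) <| by
    rintro a b ⟨W, hW, h₁, h₂, e⟩
    refine Subtype.ext ?_
    dsimp only
    rw [← F.ideal_map_germ_map_res h₁ hW, e, F.ideal_map_germ_map_res]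

lemma fgIdealStalkMap_mk (a : FGGermRep F x) :
    (fgIdealStalkMap F x (Quot.mk _ a)).1 = a.2.1.map (F.germ a.1.1 x a.1.2).hom :=
  rfl

lemma fgIdealStalkMap_mk_span (U : Opens X) (hU : x ∈ U) {m : ℕ} (s : Fin m → F.obj (op U)) :
    fgIdealStalkMap F x
        (Quot.mk _ ⟨⟨U, hU⟩, ⟨Ideal.span (Set.range s), Submodule.fg_span (Set.finite_range s)⟩⟩) =
      ⟨Ideal.span (Set.range fun i => F.germ U x hU (s i)),
        Submodule.fg_span (Set.finite_range _)⟩ := by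
  refine Subtype.ext ((Ideal.map_span _ _).trans ?_)
  rw [← Set.range_comp]
  rfl

lemma fgIdealStalkMap_injective : Function.Injective (fgIdealStalkMap F x) := by
  rintro ⟨a⟩ ⟨b⟩ hab
  replace hab := congrArg Subtype.val hab
  rw [fgIdealStalkMap_mk, fgIdealStalkMap_mk] at hab
  obtain ⟨W₁, hW₁, h₁, h₁', hle⟩ :=
    F.exists_ideal_map_res_le_of_ideal_map_germ_le a.1.2 b.1.2 a.2.2 b.2.1 hab.le
  obtain ⟨W₂, hW₂, h₂', h₂, hge⟩ :=
    F.exists_ideal_map_res_le_of_ideal_map_germ_le b.1.2 a.1.2 b.2.2 a.2.1 hab.ge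
  exact Quot.sound ⟨W₁ ⊓ W₂, Opens.mem_inf.mpr ⟨hW₁, hW₂⟩, inf_le_left.trans h₁,
    inf_le_left.trans h₁', le_antisymm (F.ideal_map_res_le_of_le inf_le_left hle)
      (F.ideal_map_res_le_of_le inf_le_right hge)⟩

lemma fgIdealStalkMap_surjective : Function.Surjective (fgIdealStalkMap F x) := by
  rintro ⟨J, hJ⟩
  obtain ⟨n, g, rfl⟩ := Submodule.fg_iff_exists_fin_generating_family.mp hJ
  obtain ⟨U, hU, s, hs⟩ := F.exists_germ_eq_of_finite g
  refine ⟨_, (fgIdealStalkMap_mk_span F x U hU s).trans ?_⟩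
  simp only [hs]
  rfl

end

/-- Let `F` be a presheaf of commutative rings on `X` and `x ∈ X`.
The canonical map `φₓ` from the stalk of `fgId(F)` at `x` to `fgId(Fₓ)`, sending the
class of `(U, ⟨s₁, …, sₘ⟩)` (with `x ∈ U` and `sᵢ ∈ F(U)`) to the ideal of the stalk
`Fₓ` generated by the germs `s₁,ₓ, …, sₘ,ₓ`, is a bijection. -/
theorem stalk_fgId_bijective {X : TopCat} (F : TopCat.Presheaf CommRingCat X) (x : X) :
    ∃ φ : Quot (fgGermRel F x) → FGIdeal ↥(F.stalk x),
      (∀ (U : Opens X) (hU : x ∈ U) (m : ℕ) (s : Fin m → ↥(F.obj (op U))),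
        φ (Quot.mk _
            ⟨⟨U, hU⟩, ⟨Ideal.span (Set.range s), Submodule.fg_span (Set.finite_range s)⟩⟩) =
          ⟨Ideal.span (Set.range fun i => F.germ U x hU (s i)),
            Submodule.fg_span (Set.finite_range _)⟩) ∧
      Function.Bijective φ :=
  ⟨fgIdealStalkMap F x, fun U hU _ s => fgIdealStalkMap_mk_span F x U hU s,
    fgIdealStalkMap_injective F x, fgIdealStalkMap_surjective F x⟩
end
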